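/- arXiv:2211.07861 — 8 statements merged into one kernel-verified Lean document; each statement's English description precedes it below -/
import Mathlib

section
/- For all real numbers λ, ν, γ with λ > 0, 0 < ν < 1 and 0 < γ ≤ 1/2, one has λ^(1+2γ) / ((1−ν)·λ + ν)² ≤ ν^(2γ−1) · (1−ν)^(−2γ−1). -/
/-!
Weighted AM–GM with weights `p/2` and `1 - p/2` gives `(a x)^p b^(2-p) ≤ (a x + b)^2`; dividing
`x^p` by both sides, the powers of `x` cancel.
-/

namespace Real

theorem rpow_mul_rpow_one_sub_le_add {a b θ : ℝ} (ha : 0 ≤ a) (hb : 0 ≤ b) (hθ0 : 0 ≤ θ)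
    (hθ1 : θ ≤ 1) : a ^ θ * b ^ (1 - θ) ≤ a + b :=
  calc a ^ θ * b ^ (1 - θ) ≤ θ * a + (1 - θ) * b :=
        geom_mean_le_arith_mean2_weighted hθ0 (by linarith) ha hb (by ring)
    _ ≤ a + b := by nlinarith

theorem rpow_mul_rpow_two_sub_le_add_sq {a b p : ℝ} (ha : 0 ≤ a) (hb : 0 ≤ b) (hp0 : 0 ≤ p)
    (hp2 : p ≤ 2) : a ^ p * b ^ (2 - p) ≤ (a + b) ^ 2 := by
  have hsq : a ^ p * b ^ (2 - p) = (a ^ (p / 2) * b ^ (1 - p / 2)) ^ 2 := by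
    rw [mul_pow, ← rpow_mul_natCast ha, ← rpow_mul_natCast hb]
    norm_num [sub_mul, div_mul_cancel₀]
  rw [hsq]
  exact pow_le_pow_left₀ (by positivity)
    (rpow_mul_rpow_one_sub_le_add ha hb (by linarith) (by linarith)) 2

theorem rpow_div_mul_add_sq_le {a b x p : ℝ} (ha : 0 < a) (hb : 0 < b) (hx : 0 < x)
    (hp0 : 0 ≤ p) (hp2 : p ≤ 2) : x ^ p / (a * x + b) ^ 2 ≤ a ^ (-p) * b ^ (p - 2) := by
  have hden : 0 < (a * x) ^ p * b ^ (2 - p) := by positivity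
  calc x ^ p / (a * x + b) ^ 2 ≤ x ^ p / ((a * x) ^ p * b ^ (2 - p)) :=
        div_le_div_of_nonneg_left (by positivity) hden
          (rpow_mul_rpow_two_sub_le_add_sq (by positivity) hb.le hp0 hp2)
    _ = a ^ (-p) * b ^ (p - 2) := by
        rw [mul_rpow ha.le hx.le, rpow_neg ha.le, show p - 2 = -(2 - p) by ring,
          rpow_neg hb.le]
        have : 0 < x ^ p := by positivity
        field_simp

end Real

/-- Scalar bound for the time-discretized R-SVGF: for `λ > 0`, `0 < ν < 1`, `0 < γ ≤ 1/2`,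
`λ^(1+2γ) / ((1−ν)·λ + ν)² ≤ ν^(2γ−1) · (1−ν)^(−2γ−1)`. -/
theorem stmt1 (lam ν γ : ℝ) (hlam : 0 < lam) (hν0 : 0 < ν) (hν1 : ν < 1)
    (hγ0 : 0 < γ) (hγ : γ ≤ 1 / 2) :
    lam ^ (1 + 2 * γ) / ((1 - ν) * lam + ν) ^ 2
      ≤ ν ^ (2 * γ - 1) * (1 - ν) ^ (-(2 * γ) - 1) := by
  have h := Real.rpow_div_mul_add_sq_le (sub_pos.mpr hν1) hν0 hlam
    (p := 1 + 2 * γ) (by linarith) (by linarith)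
  convert h using 1
  rw [mul_comm]
  congr 2 <;> ring
end

section
/- Let λ : ℕ → ℝ satisfy λ i > 0 for all i, let c : ℕ → ℝ be such that the family (c i²) is summable, let γ ∈ (0, 1/2] and ν ∈ (0,1). Put R² := Σ_i (c i)², I := Σ_i (λ i)^(2γ) · (c i)², and I_ν := Σ_i ((λ i)^(1+2γ) / ((1−ν)·λ i + ν)) · (c i)². Assume the family ((λ i)^(2γ)·(c i)²) is summable and that 2·(ν/(1−ν))^(2γ)·R² ≤ I. Then the family defining I_ν is summable and (1/2)·(1−ν)^(−1)·I ≤ I_ν ≤ (1−ν)^(−1)·I. -/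
/-- Proposition 4 (spectral form): equivalence between the Fisher information
`I = Σ λᵢ^(2γ) cᵢ²` and the regularized Stein–Fisher information
`I_ν = Σ (λᵢ^(1+2γ)/((1−ν)λᵢ+ν)) cᵢ²`, under the condition
`2 (ν/(1−ν))^(2γ) R² ≤ I` with `R² = Σ cᵢ²`. -/
theorem stmt2 (lam c : ℕ → ℝ) (γ ν : ℝ)
    (hlam : ∀ i, 0 < lam i)
    (hc : Summable fun i => c i ^ 2)
    (hγ0 : 0 < γ) (hγ : γ ≤ 1 / 2) (hν0 : 0 < ν) (hν1 : ν < 1)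
    (hI : Summable fun i => lam i ^ (2 * γ) * c i ^ 2)
    (hcond : 2 * (ν / (1 - ν)) ^ (2 * γ) * (∑' i, c i ^ 2)
      ≤ ∑' i, lam i ^ (2 * γ) * c i ^ 2) :
    (Summable fun i => lam i ^ (1 + 2 * γ) / ((1 - ν) * lam i + ν) * c i ^ 2) ∧
    (1 / 2) * (1 - ν)⁻¹ * (∑' i, lam i ^ (2 * γ) * c i ^ 2)
      ≤ (∑' i, lam i ^ (1 + 2 * γ) / ((1 - ν) * lam i + ν) * c i ^ 2) ∧
    (∑' i, lam i ^ (1 + 2 * γ) / ((1 - ν) * lam i + ν) * c i ^ 2)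
      ≤ (1 - ν)⁻¹ * (∑' i, lam i ^ (2 * γ) * c i ^ 2) := by
  have h1ν : (0:ℝ) < 1 - ν := by linarith
  set t : ℝ := ν / (1 - ν) with ht
  have ht0 : 0 < t := div_pos hν0 h1ν
  set f : ℕ → ℝ := fun i => lam i ^ (1 + 2 * γ) / ((1 - ν) * lam i + ν) * c i ^ 2 with hf
  set a : ℕ → ℝ := fun i => lam i ^ (2 * γ) * c i ^ 2 with ha
  set g : ℕ → ℝ := fun i => ν * (lam i ^ (2 * γ) / ((1 - ν) * lam i + ν)) * c i ^ 2 with hg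
  have hD : ∀ i, 0 < (1 - ν) * lam i + ν := fun i =>
    add_pos (mul_pos h1ν (hlam i)) hν0
  have hlamrpow : ∀ i, (0:ℝ) < lam i ^ (2 * γ) := fun i => Real.rpow_pos_of_pos (hlam i) _
  have hsplit : ∀ i, lam i ^ (1 + 2 * γ) = lam i * lam i ^ (2 * γ) := by
    intro i
    rw [Real.rpow_add (hlam i), Real.rpow_one]
  -- pointwise upper bound
  have hfle : ∀ i, f i ≤ (1 - ν)⁻¹ * a i := by
    intro i
    have h1 : lam i ^ (1 + 2 * γ) / ((1 - ν) * lam i + ν)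
        ≤ lam i ^ (1 + 2 * γ) / ((1 - ν) * lam i) := by
      apply div_le_div_of_nonneg_left (Real.rpow_pos_of_pos (hlam i) _).le
        (mul_pos h1ν (hlam i))
      linarith
    have h2 : lam i ^ (1 + 2 * γ) / ((1 - ν) * lam i) = (1 - ν)⁻¹ * lam i ^ (2 * γ) := by
      rw [div_eq_iff (mul_pos h1ν (hlam i)).ne', hsplit i]
      field_simp
    have := h1.trans_eq h2
    have hc2 : (0:ℝ) ≤ c i ^ 2 := sq_nonneg _
    simp only [hf, ha]
    calc lam i ^ (1 + 2 * γ) / ((1 - ν) * lam i + ν) * c i ^ 2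
        ≤ (1 - ν)⁻¹ * lam i ^ (2 * γ) * c i ^ 2 := by
          exact mul_le_mul_of_nonneg_right this hc2
      _ = (1 - ν)⁻¹ * (lam i ^ (2 * γ) * c i ^ 2) := by ring
  have hf0 : ∀ i, 0 ≤ f i :=
    fun i => mul_nonneg (div_nonneg (Real.rpow_pos_of_pos (hlam i) _).le (hD i).le) (sq_nonneg _)
  have hfsum : Summable f := Summable.of_nonneg_of_le hf0 hfle (hI.mul_left _)
  -- decomposition a = (1-ν) f + g
  have hdecomp : ∀ i, a i = (1 - ν) * f i + g i := by
    intro i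
    simp only [ha, hf, hg, hsplit i]
    have hD' := (hD i).ne'
    field_simp
  -- pointwise bound on g
  have hgle : ∀ i, g i ≤ t ^ (2 * γ) * c i ^ 2 := by
    intro i
    have hc2 : (0:ℝ) ≤ c i ^ 2 := sq_nonneg _
    refine mul_le_mul_of_nonneg_right ?_ hc2
    rcases le_total (lam i) t with h | h
    · -- small lam: denominator ≥ ν
      have h1 : ν * (lam i ^ (2 * γ) / ((1 - ν) * lam i + ν)) ≤ lam i ^ (2 * γ) := by
        rw [mul_div_assoc', div_le_iff₀ (hD i)]
        nlinarith [hlamrpow i, mul_pos h1ν (hlam i), mul_pos (hlamrpow i) (mul_pos h1ν (hlam i))]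
      exact h1.trans (Real.rpow_le_rpow (hlam i).le h (by positivity))
    · -- large lam: denominator ≥ (1-ν) lam
      have h1 : ν * (lam i ^ (2 * γ) / ((1 - ν) * lam i + ν))
          ≤ ν * (lam i ^ (2 * γ) / ((1 - ν) * lam i)) := by
        refine mul_le_mul_of_nonneg_left ?_ hν0.le
        apply div_le_div_of_nonneg_left (hlamrpow i).le (mul_pos h1ν (hlam i))
        linarith
      have h2 : ν * (lam i ^ (2 * γ) / ((1 - ν) * lam i)) = t * lam i ^ (2 * γ - 1) := by
        rw [Real.rpow_sub (hlam i), Real.rpow_one, ht]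
        field_simp
      have h3 : lam i ^ (2 * γ - 1) ≤ t ^ (2 * γ - 1) :=
        Real.rpow_le_rpow_of_nonpos ht0 h (by linarith)
      have h4 : t * t ^ (2 * γ - 1) = t ^ (2 * γ) := by
        nth_rewrite 1 [← Real.rpow_one t]
        rw [← Real.rpow_add ht0]
        norm_num
      calc ν * (lam i ^ (2 * γ) / ((1 - ν) * lam i + ν))
          ≤ t * lam i ^ (2 * γ - 1) := h1.trans_eq h2
        _ ≤ t * t ^ (2 * γ - 1) := mul_le_mul_of_nonneg_left h3 ht0.le
        _ = t ^ (2 * γ) := h4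
  have hg0 : ∀ i, 0 ≤ g i := fun i =>
    mul_nonneg (mul_nonneg hν0.le (div_nonneg (hlamrpow i).le (hD i).le)) (sq_nonneg _)
  have hgsum : Summable g := Summable.of_nonneg_of_le hg0 hgle (hc.mul_left _)
  -- sum identities
  have hsum_eq : (∑' i, a i) = (1 - ν) * (∑' i, f i) + ∑' i, g i := by
    calc (∑' i, a i) = ∑' i, ((1 - ν) * f i + g i) := tsum_congr hdecomp
      _ = (∑' i, (1 - ν) * f i) + ∑' i, g i := Summable.tsum_add (hfsum.mul_left _) hgsum
      _ = (1 - ν) * (∑' i, f i) + ∑' i, g i := by rw [tsum_mul_left]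
  have hgsum_le : (∑' i, g i) ≤ t ^ (2 * γ) * ∑' i, c i ^ 2 := by
    calc (∑' i, g i) ≤ ∑' i, t ^ (2 * γ) * c i ^ 2 :=
          Summable.tsum_le_tsum hgle hgsum (hc.mul_left _)
      _ = t ^ (2 * γ) * ∑' i, c i ^ 2 := tsum_mul_left
  have hcond' : (∑' i, g i) ≤ (∑' i, a i) / 2 := by
    have := hgsum_le.trans (by linarith : t ^ (2 * γ) * (∑' i, c i ^ 2) ≤ (∑' i, a i) / 2)
    exact this
  refine ⟨hfsum, ?_, ?_⟩
  · -- lower bound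
    have key : (∑' i, a i) / 2 ≤ (1 - ν) * (∑' i, f i) := by linarith
    have : (1 / 2) * (1 - ν)⁻¹ * (∑' i, a i) = ((∑' i, a i) / 2) / (1 - ν) := by
      ring
    rw [this, div_le_iff₀ h1ν]
    linarith
  · -- upper bound
    calc (∑' i, f i) ≤ ∑' i, (1 - ν)⁻¹ * a i := Summable.tsum_le_tsum hfle hfsum (hI.mul_left _)
      _ = (1 - ν)⁻¹ * ∑' i, a i := tsum_mul_left
end

section
/- Let λ : ℕ → ℝ satisfy λ i > 0 for all i, let c : ℕ → ℝ be such that the families ((c i)²) and ((λ i)^(2γ)·(c i)²) are summable, let γ ∈ (0, 1/2] and ν ∈ (0,1). Then the family ((λ i)^(1+2γ)/((1−ν)·λ i + ν) · (c i)²) is summable and (1−ν)^(−1)·Σ_i (λ i)^(2γ)·(c i)² − Σ_i ((λ i)^(1+2γ)/((1−ν)·λ i + ν))·(c i)² ≤ ν^(2γ)·(1−ν)^(−1−2γ)·Σ_i (c i)². -/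
open Real

private lemma s_pow_le (s γ : ℝ) (hs : 0 < s) (hγ0 : 0 < γ) (hγ : 2 * γ ≤ 1) :
    s ^ (2 * γ) ≤ s + 1 := by
  rcases le_total s 1 with h | h
  · have : s ^ (2 * γ) ≤ 1 := Real.rpow_le_one hs.le h (by linarith)
    linarith
  · have : s ^ (2 * γ) ≤ s ^ (1 : ℝ) :=
      Real.rpow_le_rpow_of_exponent_le h hγ
    rw [Real.rpow_one] at this
    linarith

private lemma key (ν γ t : ℝ) (hν0 : 0 < ν) (hν1 : ν < 1) (hγ0 : 0 < γ)
    (hγ : γ ≤ 1 / 2) (ht : 0 < t) :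
    (1 - ν)⁻¹ * t ^ (2 * γ) - t ^ (1 + 2 * γ) / ((1 - ν) * t + ν)
      ≤ ν ^ (2 * γ) * (1 - ν) ^ (-1 - 2 * γ) := by
  have h1ν : 0 < 1 - ν := by linarith
  have hD : 0 < (1 - ν) * t + ν := by positivity
  have htpow : t ^ (1 + 2 * γ) = t * t ^ (2 * γ) := by
    rw [Real.rpow_add ht, Real.rpow_one]
  have hLHS : (1 - ν)⁻¹ * t ^ (2 * γ) - t ^ (1 + 2 * γ) / ((1 - ν) * t + ν)
      = t ^ (2 * γ) * ν / ((1 - ν) * ((1 - ν) * t + ν)) := by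
    rw [htpow]; field_simp; ring
  rw [hLHS, div_le_iff₀ (by positivity)]
  -- reduce to: ((1-ν)t)^(2γ) * ν ≤ ν^(2γ) * ((1-ν)t + ν)
  set u : ℝ := (1 - ν) * t with hu
  have hu0 : 0 < u := by positivity
  have hmain : u ^ (2 * γ) * ν ≤ ν ^ (2 * γ) * (u + ν) := by
    set s : ℝ := u / ν with hsdef
    have hs0 : 0 < s := by positivity
    have hus : u = ν * s := by rw [hsdef]; field_simp
    have hupow : u ^ (2 * γ) = ν ^ (2 * γ) * s ^ (2 * γ) := by
      rw [hus, Real.mul_rpow hν0.le hs0.le]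
    have hkey : s ^ (2 * γ) ≤ s + 1 := s_pow_le s γ hs0 hγ0 (by linarith)
    have hνpow : 0 < ν ^ (2 * γ) := Real.rpow_pos_of_pos hν0 _
    calc u ^ (2 * γ) * ν = ν ^ (2 * γ) * s ^ (2 * γ) * ν := by rw [hupow]
      _ ≤ ν ^ (2 * γ) * (s + 1) * ν := by
          have h := mul_le_mul_of_nonneg_left hkey hνpow.le
          nlinarith
      _ = ν ^ (2 * γ) * (u + ν) := by rw [hus]; ring
  -- now convert hmain into the goal
  have hexp : (1 - ν) ^ (-1 - 2 * γ) = (1 - ν)⁻¹ * ((1 - ν) ^ (2 * γ))⁻¹ := by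
    rw [show (-1 - 2 * γ) = (-1) + (-(2 * γ)) by ring, Real.rpow_add h1ν,
      Real.rpow_neg_one, Real.rpow_neg h1ν.le]
  have hmul : t ^ (2 * γ) * (1 - ν) ^ (2 * γ) = u ^ (2 * γ) := by
    rw [hu, Real.mul_rpow h1ν.le ht.le]; ring
  have he : 0 < (1 - ν) ^ (2 * γ) := Real.rpow_pos_of_pos h1ν _
  rw [hexp]
  rw [show ν ^ (2 * γ) * ((1 - ν)⁻¹ * ((1 - ν) ^ (2 * γ))⁻¹) * ((1 - ν) * ((1 - ν) * t + ν))
      = ν ^ (2 * γ) * (u + ν) * ((1 - ν) ^ (2 * γ))⁻¹ by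
    field_simp; ring]
  have := hmain
  rw [← hmul] at this
  calc t ^ (2 * γ) * ν = t ^ (2 * γ) * (1 - ν) ^ (2 * γ) * ν * ((1 - ν) ^ (2 * γ))⁻¹ := by
        field_simp
    _ ≤ ν ^ (2 * γ) * (u + ν) * ((1 - ν) ^ (2 * γ))⁻¹ := by
        apply mul_le_mul_of_nonneg_right this (by positivity)

/-- Gap bound between Fisher information and regularized Stein–Fisher information
(spectral form): `(1−ν)⁻¹ Σ λᵢ^(2γ) cᵢ² − Σ (λᵢ^(1+2γ)/((1−ν)λᵢ+ν)) cᵢ²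
≤ ν^(2γ) (1−ν)^(−1−2γ) Σ cᵢ²`. -/
theorem stmt3 (lam c : ℕ → ℝ) (γ ν : ℝ)
    (hlam : ∀ i, 0 < lam i)
    (hc : Summable fun i => c i ^ 2)
    (hI : Summable fun i => lam i ^ (2 * γ) * c i ^ 2)
    (hγ0 : 0 < γ) (hγ : γ ≤ 1 / 2) (hν0 : 0 < ν) (hν1 : ν < 1) :
    (Summable fun i => lam i ^ (1 + 2 * γ) / ((1 - ν) * lam i + ν) * c i ^ 2) ∧
    (1 - ν)⁻¹ * (∑' i, lam i ^ (2 * γ) * c i ^ 2)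
        - (∑' i, lam i ^ (1 + 2 * γ) / ((1 - ν) * lam i + ν) * c i ^ 2)
      ≤ ν ^ (2 * γ) * (1 - ν) ^ (-1 - 2 * γ) * ∑' i, c i ^ 2 := by
  have h1ν : 0 < 1 - ν := by linarith
  have hD : ∀ i, 0 < (1 - ν) * lam i + ν := fun i => by have := hlam i; positivity
  have hb_nonneg : ∀ i, 0 ≤ lam i ^ (1 + 2 * γ) / ((1 - ν) * lam i + ν) * c i ^ 2 := by
    intro i
    have := hlam i; have := hD i
    positivity
  have hb_le : ∀ i, lam i ^ (1 + 2 * γ) / ((1 - ν) * lam i + ν) * c i ^ 2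
      ≤ (1 - ν)⁻¹ * (lam i ^ (2 * γ) * c i ^ 2) := by
    intro i
    have hl := hlam i
    have hDi := hD i
    have htpow : lam i ^ (1 + 2 * γ) = lam i * lam i ^ (2 * γ) := by
      rw [Real.rpow_add hl, Real.rpow_one]
    have hfrac : lam i ^ (1 + 2 * γ) / ((1 - ν) * lam i + ν)
        ≤ (1 - ν)⁻¹ * lam i ^ (2 * γ) := by
      rw [htpow, div_le_iff₀ hDi]
      have hp : 0 < lam i ^ (2 * γ) := Real.rpow_pos_of_pos hl _
      have h2 : lam i ≤ (1 - ν)⁻¹ * ((1 - ν) * lam i + ν) := by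
        rw [mul_add, ← mul_assoc, inv_mul_cancel₀ h1ν.ne', one_mul]
        have : 0 < (1 - ν)⁻¹ * ν := by positivity
        linarith
      calc lam i * lam i ^ (2 * γ) = lam i ^ (2 * γ) * lam i := by ring
        _ ≤ lam i ^ (2 * γ) * ((1 - ν)⁻¹ * ((1 - ν) * lam i + ν)) :=
            mul_le_mul_of_nonneg_left h2 hp.le
        _ = (1 - ν)⁻¹ * lam i ^ (2 * γ) * ((1 - ν) * lam i + ν) := by ring
    calc lam i ^ (1 + 2 * γ) / ((1 - ν) * lam i + ν) * c i ^ 2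
        ≤ (1 - ν)⁻¹ * lam i ^ (2 * γ) * c i ^ 2 :=
          mul_le_mul_of_nonneg_right hfrac (sq_nonneg _)
      _ = (1 - ν)⁻¹ * (lam i ^ (2 * γ) * c i ^ 2) := by ring
  have hSb : Summable fun i => lam i ^ (1 + 2 * γ) / ((1 - ν) * lam i + ν) * c i ^ 2 :=
    Summable.of_nonneg_of_le hb_nonneg hb_le (hI.mul_left _)
  refine ⟨hSb, ?_⟩
  have hSa : Summable fun i => (1 - ν)⁻¹ * (lam i ^ (2 * γ) * c i ^ 2) := hI.mul_left _
  have hSd : Summable fun i => (1 - ν)⁻¹ * (lam i ^ (2 * γ) * c i ^ 2)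
      - lam i ^ (1 + 2 * γ) / ((1 - ν) * lam i + ν) * c i ^ 2 := hSa.sub hSb
  have hdle : ∀ i, (1 - ν)⁻¹ * (lam i ^ (2 * γ) * c i ^ 2)
      - lam i ^ (1 + 2 * γ) / ((1 - ν) * lam i + ν) * c i ^ 2
      ≤ ν ^ (2 * γ) * (1 - ν) ^ (-1 - 2 * γ) * c i ^ 2 := by
    intro i
    have hk := key ν γ (lam i) hν0 hν1 hγ0 hγ (hlam i)
    have := mul_le_mul_of_nonneg_right hk (sq_nonneg (c i))
    calc (1 - ν)⁻¹ * (lam i ^ (2 * γ) * c i ^ 2)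
        - lam i ^ (1 + 2 * γ) / ((1 - ν) * lam i + ν) * c i ^ 2
        = ((1 - ν)⁻¹ * lam i ^ (2 * γ)
            - lam i ^ (1 + 2 * γ) / ((1 - ν) * lam i + ν)) * c i ^ 2 := by ring
      _ ≤ ν ^ (2 * γ) * (1 - ν) ^ (-1 - 2 * γ) * c i ^ 2 := this
  have hsum_le : (∑' i, ((1 - ν)⁻¹ * (lam i ^ (2 * γ) * c i ^ 2)
      - lam i ^ (1 + 2 * γ) / ((1 - ν) * lam i + ν) * c i ^ 2))
      ≤ ∑' i, ν ^ (2 * γ) * (1 - ν) ^ (-1 - 2 * γ) * c i ^ 2 :=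
    Summable.tsum_le_tsum hdle hSd (hc.mul_left _)
  rw [Summable.tsum_sub hSa hSb, tsum_mul_left, tsum_mul_left] at hsum_le
  exact hsum_le
end

section
/- Let Λ > 0, let λ : ℕ → ℝ satisfy 0 < λ i ≤ Λ for all i, let c : ℕ → ℝ be such that ((c i)²) is summable, let γ ∈ (0, 1/2] and ν ∈ (0,1). Then Σ_i ((1−λ i)²·ν²·(λ i)^(2γ) / ((1−ν)·λ i + ν)²)·(c i)² ≤ (max Λ 1)²·ν^(2γ)·(1−ν)^(−2γ)·Σ_i (c i)². -/
lemma stmt4_key (Λ l γ ν : ℝ) (hΛ : 0 < Λ) (hl : 0 < l) (hlΛ : l ≤ Λ)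
    (hγ0 : 0 < γ) (hγ : γ ≤ 1 / 2) (hν0 : 0 < ν) (hν1 : ν < 1) :
    (1 - l) ^ 2 * ν ^ 2 * l ^ (2 * γ) / ((1 - ν) * l + ν) ^ 2
      ≤ (max Λ 1) ^ 2 * ν ^ (2 * γ) * (1 - ν) ^ (-(2 * γ)) := by
  have h1ν : 0 < 1 - ν := by linarith
  have hD : 0 < (1 - ν) * l + ν := by positivity
  -- weighted AM-GM : ((1-ν)l)^γ * ν^(1-γ) ≤ (1-ν)l + ν
  have hgm : ((1 - ν) * l) ^ γ * ν ^ (1 - γ) ≤ (1 - ν) * l + ν := by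
    have h := Real.geom_mean_le_arith_mean2_weighted hγ0.le (by linarith : (0:ℝ) ≤ 1 - γ)
      (by positivity : (0:ℝ) ≤ (1 - ν) * l) hν0.le (by ring)
    have h1 : γ * ((1 - ν) * l) ≤ (1 - ν) * l := by
      nlinarith [mul_pos h1ν hl]
    have h2 : (1 - γ) * ν ≤ ν := by nlinarith
    linarith
  -- hence  ν l^γ / D ≤ ν^γ (1-ν)^(-γ)
  have hA : ν * l ^ γ / ((1 - ν) * l + ν) ≤ ν ^ γ * (1 - ν) ^ (-γ) := by
    rw [div_le_iff₀ hD]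
    have hrw : ν ^ γ * (1 - ν) ^ (-γ) * (((1 - ν) * l) ^ γ * ν ^ (1 - γ)) = ν * l ^ γ := by
      rw [Real.mul_rpow h1ν.le hl.le]
      have e1 : (1 - ν) ^ (-γ) * (1 - ν) ^ γ = 1 := by
        rw [← Real.rpow_add h1ν]; norm_num
      have e2 : ν ^ γ * ν ^ (1 - γ) = ν := by
        rw [← Real.rpow_add hν0]; norm_num
      calc ν ^ γ * (1 - ν) ^ (-γ) * ((1 - ν) ^ γ * l ^ γ * ν ^ (1 - γ))
          = ((1 - ν) ^ (-γ) * (1 - ν) ^ γ) * (ν ^ γ * ν ^ (1 - γ)) * l ^ γ := by ring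
        _ = ν * l ^ γ := by rw [e1, e2]; ring
    calc ν * l ^ γ = ν ^ γ * (1 - ν) ^ (-γ) * (((1 - ν) * l) ^ γ * ν ^ (1 - γ)) := hrw.symm
      _ ≤ ν ^ γ * (1 - ν) ^ (-γ) * ((1 - ν) * l + ν) := by
          apply mul_le_mul_of_nonneg_left hgm; positivity
  have hAnn : 0 ≤ ν * l ^ γ / ((1 - ν) * l + ν) := by positivity
  have hB2 : (ν * l ^ γ / ((1 - ν) * l + ν)) ^ 2 ≤ (ν ^ γ * (1 - ν) ^ (-γ)) ^ 2 :=
    pow_le_pow_left₀ hAnn hA 2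
  have hB1 : (1 - l) ^ 2 ≤ (max Λ 1) ^ 2 := by
    have hM1 : (1:ℝ) ≤ max Λ 1 := le_max_right _ _
    have hMΛ : Λ ≤ max Λ 1 := le_max_left _ _
    apply sq_le_sq'
    · linarith
    · linarith
  have hl2γ : l ^ (2 * γ) = (l ^ γ) ^ 2 := by
    rw [mul_comm, Real.rpow_mul hl.le]
    norm_num
  have hν2γ : ν ^ (2 * γ) = (ν ^ γ) ^ 2 := by
    rw [mul_comm, Real.rpow_mul hν0.le]
    norm_num
  have hν2γ' : (1 - ν) ^ (-(2 * γ)) = ((1 - ν) ^ (-γ)) ^ 2 := by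
    have : -(2 * γ) = -γ * 2 := by ring
    rw [this, Real.rpow_mul h1ν.le]
    norm_num
  have hLHS : (1 - l) ^ 2 * ν ^ 2 * l ^ (2 * γ) / ((1 - ν) * l + ν) ^ 2
      = (1 - l) ^ 2 * (ν * l ^ γ / ((1 - ν) * l + ν)) ^ 2 := by
    rw [hl2γ]; field_simp
  have hRHS : (max Λ 1) ^ 2 * ν ^ (2 * γ) * (1 - ν) ^ (-(2 * γ))
      = (max Λ 1) ^ 2 * (ν ^ γ * (1 - ν) ^ (-γ)) ^ 2 := by
    rw [hν2γ, hν2γ']; ring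
  rw [hLHS, hRHS]
  exact mul_le_mul hB1 hB2 (by positivity) (by positivity)

/-- Approximation estimate of Theorems 1 and 3:
`Σ ((1−λᵢ)² ν² λᵢ^(2γ)/((1−ν)λᵢ+ν)²) cᵢ² ≤ (max Λ 1)² ν^(2γ) (1−ν)^(−2γ) Σ cᵢ²`
for eigenvalues `0 < λᵢ ≤ Λ`. -/
theorem stmt4 (Λ : ℝ) (hΛ : 0 < Λ) (lam c : ℕ → ℝ)
    (hlam0 : ∀ i, 0 < lam i) (hlamΛ : ∀ i, lam i ≤ Λ)
    (hc : Summable fun i => c i ^ 2)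
    (γ ν : ℝ) (hγ0 : 0 < γ) (hγ : γ ≤ 1 / 2) (hν0 : 0 < ν) (hν1 : ν < 1) :
    (∑' i, ((1 - lam i) ^ 2 * ν ^ 2 * lam i ^ (2 * γ) / ((1 - ν) * lam i + ν) ^ 2) * c i ^ 2)
      ≤ (max Λ 1) ^ 2 * ν ^ (2 * γ) * (1 - ν) ^ (-(2 * γ)) * ∑' i, c i ^ 2 := by
  set C := (max Λ 1) ^ 2 * ν ^ (2 * γ) * (1 - ν) ^ (-(2 * γ)) with hC
  have h1ν : 0 < 1 - ν := by linarith
  have hCnn : 0 ≤ C := by rw [hC]; positivity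
  have hterm : ∀ i, ((1 - lam i) ^ 2 * ν ^ 2 * lam i ^ (2 * γ) / ((1 - ν) * lam i + ν) ^ 2)
      * c i ^ 2 ≤ C * c i ^ 2 := fun i =>
    mul_le_mul_of_nonneg_right
      (stmt4_key Λ (lam i) γ ν hΛ (hlam0 i) (hlamΛ i) hγ0 hγ hν0 hν1) (sq_nonneg _)
  have htermnn : ∀ i, 0 ≤ ((1 - lam i) ^ 2 * ν ^ 2 * lam i ^ (2 * γ)
      / ((1 - ν) * lam i + ν) ^ 2) * c i ^ 2 := by
    intro i
    have hD : 0 < (1 - ν) * lam i + ν := by have := hlam0 i; positivity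
    have := hlam0 i
    positivity
  have hsumR : Summable fun i => C * c i ^ 2 := hc.mul_left C
  have hsumL : Summable fun i => ((1 - lam i) ^ 2 * ν ^ 2 * lam i ^ (2 * γ)
      / ((1 - ν) * lam i + ν) ^ 2) * c i ^ 2 :=
    Summable.of_nonneg_of_le htermnn hterm hsumR
  calc (∑' i, ((1 - lam i) ^ 2 * ν ^ 2 * lam i ^ (2 * γ) / ((1 - ν) * lam i + ν) ^ 2) * c i ^ 2)
      ≤ ∑' i, C * c i ^ 2 := Summable.tsum_le_tsum hterm hsumL hsumR
    _ = C * ∑' i, c i ^ 2 := tsum_mul_left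
end

section
/- Let H and K be real Hilbert spaces, A : H → K a continuous linear map with adjoint A*, and ν ∈ (0,1]; let M_ν := (1−ν)·(A*∘A) + ν·Id on H, which is bijective. Suppose (e_i)_{i∈ι} is a Hilbert basis (complete orthonormal family) of K and λ : ι → ℝ satisfies λ i ≥ 0 and (A∘A*)(e_i) = (λ i)·e_i for every i. Then for every g ∈ K, ⟨A*g, M_ν⁻¹(A*g)⟩_H = Σ_i (λ i / ((1−ν)·λ i + ν)) · ⟨g, e_i⟩². -/
set_option maxHeartbeats 1000000


open scoped InnerProductSpace

lemma isUnit_of_coercive {H : Type*} [NormedAddCommGroup H] [InnerProductSpace ℝ H]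
    [CompleteSpace H] (T : H →L[ℝ] H) (c : ℝ) (hc : 0 < c)
    (h : ∀ x, c * ‖x‖ * ‖x‖ ≤ ⟪T x, x⟫_ℝ) : IsUnit T := by
  set B : H →L[ℝ] H →L[ℝ] ℝ := (innerSL ℝ).comp T with hB
  have coercive : IsCoercive B := ⟨c, hc, fun x => h x⟩
  have hTeq : T = (coercive.continuousLinearEquivOfBilin : H →L[ℝ] H) := by
    ext x
    exact coercive.unique_continuousLinearEquivOfBilin (fun w => rfl)
  set E := coercive.continuousLinearEquivOfBilin
  refine ⟨⟨T, (E.symm : H →L[ℝ] H), ?_, ?_⟩, rfl⟩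
  · ext x; simp [hTeq, ContinuousLinearMap.mul_apply]
  · ext x; simp [hTeq, ContinuousLinearMap.mul_apply]

/-- Spectral representation (equation (13) / Remark 3) of the regularized
Stein–Fisher information: if `(e_i)` is a Hilbert basis of `K` consisting of
eigenvectors of `A A*` with nonnegative eigenvalues `λ i`, then
`⟨A*g, M_ν⁻¹ A*g⟩ = Σ' i, (λ i / ((1−ν) λ i + ν)) ⟨g, e_i⟩²`. -/
theorem stmt8 {ι H K : Type*}
    [NormedAddCommGroup H] [InnerProductSpace ℝ H] [CompleteSpace H]
    [NormedAddCommGroup K] [InnerProductSpace ℝ K] [CompleteSpace K]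
    (A : H →L[ℝ] K) (ν : ℝ) (hν0 : 0 < ν) (hν1 : ν ≤ 1)
    (e : HilbertBasis ι ℝ K) (lam : ι → ℝ) (hlam : ∀ i, 0 ≤ lam i)
    (heig : ∀ i, (A ∘L A.adjoint) (e i) = lam i • e i) :
    ∀ g : K,
      ⟪A.adjoint g,
        Ring.inverse ((1 - ν) • (A.adjoint ∘L A) + ν • ContinuousLinearMap.id ℝ H)
          (A.adjoint g)⟫_ℝ
      = ∑' i, (lam i / ((1 - ν) * lam i + ν)) * ⟪g, e i⟫_ℝ ^ 2 := by
  intro g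
  have hν1' : 0 ≤ 1 - ν := by linarith
  set M : H →L[ℝ] H := (1 - ν) • (A.adjoint ∘L A) + ν • ContinuousLinearMap.id ℝ H with hMdef
  set N : K →L[ℝ] K := (1 - ν) • (A ∘L A.adjoint) + ν • ContinuousLinearMap.id ℝ K with hNdef
  -- coercivity of M and N
  have hMco : ∀ x : H, ν * ‖x‖ * ‖x‖ ≤ ⟪M x, x⟫_ℝ := by
    intro x
    have h1 : ⟪M x, x⟫_ℝ = (1 - ν) * ⟪A x, A x⟫_ℝ + ν * ⟪x, x⟫_ℝ := by
      simp [hMdef, inner_add_left, real_inner_smul_left, ContinuousLinearMap.adjoint_inner_left]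
    have h2 : ⟪x, x⟫_ℝ = ‖x‖ * ‖x‖ := real_inner_self_eq_norm_mul_norm x
    rw [h1, h2]
    have : 0 ≤ (1 - ν) * ⟪A x, A x⟫_ℝ :=
      mul_nonneg hν1' real_inner_self_nonneg
    nlinarith
  have hNco : ∀ x : K, ν * ‖x‖ * ‖x‖ ≤ ⟪N x, x⟫_ℝ := by
    intro x
    have h1 : ⟪N x, x⟫_ℝ = (1 - ν) * ⟪A.adjoint x, A.adjoint x⟫_ℝ + ν * ⟪x, x⟫_ℝ := by
      simp [hNdef, inner_add_left, real_inner_smul_left, ContinuousLinearMap.adjoint_inner_left,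
        ContinuousLinearMap.adjoint_inner_right]
      left; rw [← ContinuousLinearMap.adjoint_inner_right, real_inner_self_eq_norm_sq]
    have h2 : ⟪x, x⟫_ℝ = ‖x‖ * ‖x‖ := real_inner_self_eq_norm_mul_norm x
    rw [h1, h2]
    have : 0 ≤ (1 - ν) * ⟪A.adjoint x, A.adjoint x⟫_ℝ :=
      mul_nonneg hν1' real_inner_self_nonneg
    nlinarith
  have hM : IsUnit M := isUnit_of_coercive M ν hν0 hMco
  have hN : IsUnit N := isUnit_of_coercive N ν hν0 hNco
  -- intertwining
  have hinter : M ∘L A.adjoint = A.adjoint ∘L N := by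
    ext x
    simp [hMdef, hNdef, ContinuousLinearMap.comp_apply, map_add, map_smul, smul_add]
  -- A A* is self-adjoint
  have hAAsa : ∀ x y : K, ⟪A (A.adjoint x), y⟫_ℝ = ⟪x, A (A.adjoint y)⟫_ℝ := by
    intro x y
    rw [← ContinuousLinearMap.adjoint_inner_right A (A.adjoint x) y]
    exact ContinuousLinearMap.adjoint_inner_left A (A.adjoint y) x
  -- N is self-adjoint
  have hNsa : ∀ (x y : K), ⟪N x, y⟫_ℝ = ⟪x, N y⟫_ℝ := by
    intro x y
    simp only [hNdef, ContinuousLinearMap.add_apply, ContinuousLinearMap.coe_smul',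
      Pi.smul_apply, ContinuousLinearMap.coe_id', id_eq, ContinuousLinearMap.coe_comp',
      Function.comp_apply, inner_add_left, inner_add_right, real_inner_smul_left,
      real_inner_smul_right]
    rw [hAAsa x y]
  -- M injective
  have hMinj : Function.Injective M := by
    intro x y hxy
    have h1 : Ring.inverse M * M = 1 := Ring.inverse_mul_cancel _ hM
    have := congrArg (fun f : H →L[ℝ] H => f x) h1
    have hx : Ring.inverse M (M x) = x := by
      simpa [ContinuousLinearMap.mul_apply] using this
    have := congrArg (fun f : H →L[ℝ] H => f y) h1
    have hy : Ring.inverse M (M y) = y := by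
      simpa [ContinuousLinearMap.mul_apply] using this
    rw [← hx, ← hy, hxy]
  have hNinv : N (Ring.inverse N g) = g := by
    have h1 : N * Ring.inverse N = 1 := Ring.mul_inverse_cancel _ hN
    have := congrArg (fun f : K →L[ℝ] K => f g) h1
    simpa [ContinuousLinearMap.mul_apply] using this
  -- key: M⁻¹ (A* g) = A* (N⁻¹ g)
  have hkey : Ring.inverse M (A.adjoint g) = A.adjoint (Ring.inverse N g) := by
    apply hMinj
    have h1 : M (Ring.inverse M (A.adjoint g)) = A.adjoint g := by
      have h2 : M * Ring.inverse M = 1 := Ring.mul_inverse_cancel _ hM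
      have := congrArg (fun f : H →L[ℝ] H => f (A.adjoint g)) h2
      simpa [ContinuousLinearMap.mul_apply] using this
    rw [h1]
    have h3 : M (A.adjoint (Ring.inverse N g)) = A.adjoint (N (Ring.inverse N g)) := by
      have := congrArg (fun f : K →L[ℝ] H => f (Ring.inverse N g)) hinter
      simpa [ContinuousLinearMap.comp_apply] using this
    rw [h3, hNinv]
  rw [hkey]
  have hadj : ⟪A.adjoint g, A.adjoint (Ring.inverse N g)⟫_ℝ
      = ⟪g, (A ∘L A.adjoint) (Ring.inverse N g)⟫_ℝ := by
    rw [ContinuousLinearMap.adjoint_inner_left]; rfl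
  rw [hadj]
  rw [← (e.tsum_inner_mul_inner g ((A ∘L A.adjoint) (Ring.inverse N g)))]
  refine tsum_congr fun i => ?_
  set c : ℝ := (1 - ν) * lam i + ν with hc
  have hcpos : 0 < c := by
    have : 0 ≤ (1 - ν) * lam i := mul_nonneg hν1' (hlam i)
    linarith
  -- ⟪e i, A A* x⟫ = lam i * ⟪e i, x⟫
  have hTei : ∀ x : K, ⟪e i, (A ∘L A.adjoint) x⟫_ℝ = lam i * ⟪e i, x⟫_ℝ := by
    intro x
    have hsa : ⟪e i, (A ∘L A.adjoint) x⟫_ℝ = ⟪(A ∘L A.adjoint) (e i), x⟫_ℝ := by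
      simp only [ContinuousLinearMap.coe_comp', Function.comp_apply]
      exact (hAAsa (e i) x).symm
    rw [hsa, heig i, real_inner_smul_left]
  have hNei : N (e i) = c • e i := by
    simp [hNdef, ContinuousLinearMap.add_apply, ContinuousLinearMap.smul_apply, heig i,
      smul_smul, hc, add_smul]
  have hinv : ⟪e i, Ring.inverse N g⟫_ℝ = c⁻¹ * ⟪e i, g⟫_ℝ := by
    have h1 : ⟪N (e i), Ring.inverse N g⟫_ℝ = ⟪e i, g⟫_ℝ := by
      rw [hNsa, hNinv]
    rw [hNei, real_inner_smul_left] at h1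
    field_simp at h1 ⊢
    linarith [h1]
  rw [hTei, hinv, real_inner_comm (e i) g]
  rw [hc]
  ring
end

section
/- Let H and K be real Hilbert spaces, A : H → K a continuous linear map with adjoint A*, ν ∈ (0,1], and b ∈ H; let M_ν := (1−ν)·(A*∘A) + ν·Id, which is bijective. Then: (i) every φ ∈ H with ν·‖φ‖² + (1−ν)·‖Aφ‖² ≤ 1 satisfies ⟨φ, b⟩ ≤ √(⟨b, M_ν⁻¹ b⟩); (ii) if b ≠ 0 then ⟨b, M_ν⁻¹ b⟩ > 0 and the element φ* := ⟨b, M_ν⁻¹ b⟩^(−1/2) · (M_ν⁻¹ b) satisfies ν·‖φ*‖² + (1−ν)·‖Aφ*‖² = 1 and ⟨φ*, b⟩ = √(⟨b, M_ν⁻¹ b⟩). -/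
open scoped InnerProductSpace

/-- The optimization core of Proposition 3: over the ellipsoid
`{φ : ν‖φ‖² + (1−ν)‖Aφ‖² ≤ 1}`, the linear functional `⟨·, b⟩` is maximized at
`φ* = ⟨b, M_ν⁻¹ b⟩^(−1/2) M_ν⁻¹ b` with optimal value `√⟨b, M_ν⁻¹ b⟩`,
where `M_ν = (1−ν)A*A + νId`. -/
theorem stmt11 {H K : Type*}
    [NormedAddCommGroup H] [InnerProductSpace ℝ H] [CompleteSpace H]
    [NormedAddCommGroup K] [InnerProductSpace ℝ K] [CompleteSpace K]
    (A : H →L[ℝ] K) (ν : ℝ) (hν0 : 0 < ν) (hν1 : ν ≤ 1) (b : H) :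
    let M : H →L[ℝ] H := (1 - ν) • (A.adjoint ∘L A) + ν • ContinuousLinearMap.id ℝ H
    let Minv : H →L[ℝ] H := Ring.inverse M
    (∀ φ : H, ν * ‖φ‖ ^ 2 + (1 - ν) * ‖A φ‖ ^ 2 ≤ 1 →
        ⟪φ, b⟫_ℝ ≤ Real.sqrt ⟪b, Minv b⟫_ℝ) ∧
    (b ≠ 0 →
      0 < ⟪b, Minv b⟫_ℝ ∧
      ν * ‖(Real.sqrt ⟪b, Minv b⟫_ℝ)⁻¹ • Minv b‖ ^ 2
          + (1 - ν) * ‖A ((Real.sqrt ⟪b, Minv b⟫_ℝ)⁻¹ • Minv b)‖ ^ 2 = 1 ∧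
      ⟪(Real.sqrt ⟪b, Minv b⟫_ℝ)⁻¹ • Minv b, b⟫_ℝ = Real.sqrt ⟪b, Minv b⟫_ℝ) := by
  intro M Minv
  -- basic identity for the bilinear form
  have hM_apply : ∀ x y : H, ⟪x, M y⟫_ℝ = (1 - ν) * ⟪A x, A y⟫_ℝ + ν * ⟪x, y⟫_ℝ := by
    intro x y
    simp only [M, ContinuousLinearMap.add_apply, ContinuousLinearMap.smul_apply,
      ContinuousLinearMap.comp_apply, ContinuousLinearMap.id_apply, inner_add_right,
      real_inner_smul_right, ContinuousLinearMap.adjoint_inner_right]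
  have hsymm : ∀ x y : H, ⟪y, M x⟫_ℝ = ⟪x, M y⟫_ℝ := by
    intro x y
    rw [hM_apply, hM_apply, real_inner_comm x y, real_inner_comm (A x) (A y)]
  have hq : ∀ x : H, ⟪x, M x⟫_ℝ = ν * ‖x‖ ^ 2 + (1 - ν) * ‖A x‖ ^ 2 := by
    intro x
    rw [hM_apply, real_inner_self_eq_norm_sq, real_inner_self_eq_norm_sq]
    ring
  have hν1' : (0 : ℝ) ≤ 1 - ν := by linarith
  have hq_nonneg : ∀ x : H, 0 ≤ ⟪x, M x⟫_ℝ := by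
    intro x; rw [hq]; positivity
  -- M is a unit via Lax–Milgram
  have hcoer : IsCoercive ((innerSL ℝ).comp M) := by
    refine ⟨ν, hν0, fun u => ?_⟩
    have h := hq u
    have h2 := hsymm u u
    have h3 : ⟪M u, u⟫_ℝ = ⟪u, M u⟫_ℝ := real_inner_comm _ _
    simp only [ContinuousLinearMap.comp_apply, innerSL_apply_apply]
    rw [h3, h]
    nlinarith [sq_nonneg ‖A u‖]
  set e : H ≃L[ℝ] H := hcoer.continuousLinearEquivOfBilin with he
  have heM : ∀ v : H, e v = M v := by
    intro v
    refine ext_inner_right ℝ fun w => ?_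
    calc ⟪e v, w⟫_ℝ = ((innerSL ℝ).comp M) v w := hcoer.continuousLinearEquivOfBilin_apply v w
    _ = ⟪M v, w⟫_ℝ := by simp
  have hU : IsUnit M := by
    refine ⟨⟨M, (e.symm : H →L[ℝ] H), ?_, ?_⟩, rfl⟩
    · ext x
      show M ((e.symm : H →L[ℝ] H) x) = x
      rw [← heM]
      exact e.apply_symm_apply x
    · ext x
      show (e.symm : H →L[ℝ] H) (M x) = x
      rw [← heM]
      exact e.symm_apply_apply x
  have hMMinv : ∀ x : H, M (Minv x) = x := by
    intro x
    have h := Ring.mul_inverse_cancel M hU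
    calc M (Minv x) = (M * Minv) x := rfl
    _ = (1 : H →L[ℝ] H) x := by rw [h]
    _ = x := rfl
  set y : H := Minv b with hy
  set c : ℝ := ⟪b, Minv b⟫_ℝ with hcdef
  have hyb : M y = b := hMMinv b
  have hc_eq : c = ⟪y, M y⟫_ℝ := by
    rw [hcdef, ← hy, ← hyb]
    exact real_inner_comm _ _
  have hc_eq' : c = ν * ‖y‖ ^ 2 + (1 - ν) * ‖A y‖ ^ 2 := by rw [hc_eq, hq]
  have hc_nonneg : 0 ≤ c := hc_eq ▸ hq_nonneg y
  -- quadratic expansion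
  have expand : ∀ (x : H) (t : ℝ), ⟪x - t • y, M (x - t • y)⟫_ℝ
      = ⟪x, M x⟫_ℝ - 2 * t * ⟪x, M y⟫_ℝ + t ^ 2 * ⟪y, M y⟫_ℝ := by
    intro x t
    rw [map_sub, map_smul]
    simp only [inner_sub_left, inner_sub_right, real_inner_smul_left, real_inner_smul_right]
    rw [hsymm x y]
    ring
  -- positivity of c when b ≠ 0
  have hc_pos : b ≠ 0 → 0 < c := by
    intro hb
    have hy0 : y ≠ 0 := by
      intro h
      apply hb
      rw [← hyb, h, map_zero]
    have : 0 < ‖y‖ := norm_pos_iff.mpr hy0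
    rw [hc_eq']
    nlinarith [sq_nonneg ‖A y‖, mul_pos hν0 (pow_pos this 2), mul_nonneg hν1' (sq_nonneg ‖A y‖)]
  constructor
  · -- part (i)
    intro φ hφ
    by_cases hb : b = 0
    · simp only [hb, inner_zero_right]
      exact Real.sqrt_nonneg _
    · have hc : 0 < c := hc_pos hb
      set p : ℝ := ⟪φ, b⟫_ℝ with hp
      have hφq : ⟪φ, M φ⟫_ℝ ≤ 1 := by rw [hq]; exact hφ
      have hφq0 : 0 ≤ ⟪φ, M φ⟫_ℝ := hq_nonneg φ
      have hMyb : ⟪φ, M y⟫_ℝ = p := by rw [hyb]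
      have hquad : 0 ≤ ⟪φ, M φ⟫_ℝ - 2 * (p / c) * p + (p / c) ^ 2 * c := by
        have := hq_nonneg (φ - (p / c) • y)
        rw [expand φ (p / c), hMyb, ← hc_eq] at this
        linarith
      have hsq : p ^ 2 ≤ c := by
        have hne : c ≠ 0 := ne_of_gt hc
        have h3 : (⟪φ, M φ⟫_ℝ - 2 * (p / c) * p + (p / c) ^ 2 * c) * c
            = ⟪φ, M φ⟫_ℝ * c - p ^ 2 := by field_simp; ring
        have h4 : 0 ≤ ⟪φ, M φ⟫_ℝ * c - p ^ 2 := by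
          rw [← h3]; exact mul_nonneg hquad hc.le
        nlinarith
      rcases le_or_gt p 0 with hle | hgt
      · exact hle.trans (Real.sqrt_nonneg _)
      · rw [show Real.sqrt ⟪b, Minv b⟫_ℝ = Real.sqrt c from rfl]
        exact (Real.le_sqrt hgt.le hc_nonneg).mpr hsq
  · -- part (ii)
    intro hb
    have hc : 0 < c := hc_pos hb
    have hs : Real.sqrt c > 0 := Real.sqrt_pos.mpr hc
    have hss : Real.sqrt c * Real.sqrt c = c := Real.mul_self_sqrt hc_nonneg
    refine ⟨hc, ?_, ?_⟩
    · have h1 : ‖(Real.sqrt c)⁻¹ • y‖ ^ 2 = ((Real.sqrt c)⁻¹) ^ 2 * ‖y‖ ^ 2 := by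
        rw [norm_smul, mul_pow, Real.norm_eq_abs, sq_abs]
      have h2 : ‖A ((Real.sqrt c)⁻¹ • y)‖ ^ 2 = ((Real.sqrt c)⁻¹) ^ 2 * ‖A y‖ ^ 2 := by
        rw [map_smul, norm_smul, mul_pow, Real.norm_eq_abs, sq_abs]
      have hinv : ((Real.sqrt c)⁻¹) ^ 2 = c⁻¹ := by
        rw [← Real.sqrt_inv]
        exact Real.sq_sqrt (inv_nonneg.mpr hc_nonneg)
      rw [h1, h2, hinv]
      field_simp
      linarith [hc_eq']
    · rw [real_inner_smul_left]
      have : ⟪y, b⟫_ℝ = c := by rw [hcdef, hy]; exact real_inner_comm _ _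
      rw [this]
      rw [inv_mul_eq_div, Real.div_sqrt]
end

section
/- Let E be a finite-dimensional real inner product space and k : E × E → ℝ a symmetric function (k(x,y) = k(y,x) for all x,y) which is twice continuously differentiable as a function on E × E. Suppose B₂, B₁₂ ≥ 0 are such that, for all x, y ∈ E, the second Fréchet derivative of the map u ↦ k(u,y) at x has operator norm at most B₂, and the Fréchet derivative in y of the map (x,y) ↦ ∂_x k(x,y) has operator norm at most B₁₂. Then for all x, y ∈ E: |k(x,x) − 2·k(x,y) + k(y,y)| ≤ (2·B₁₂ + 3·B₂)·‖x − y‖². -/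
/-- Kernel second-difference estimate: for a symmetric `C²` kernel `k` on a
finite-dimensional real inner product space, with `‖∇²k‖ ≤ B₂` (second derivative
in the first variable) and `‖∇₁∇₂k‖ ≤ B₁₂` (mixed second derivative),
`|k(x,x) − 2k(x,y) + k(y,y)| ≤ (2B₁₂ + 3B₂)‖x−y‖²`. -/
theorem stmt12 {E : Type*} [NormedAddCommGroup E] [InnerProductSpace ℝ E]
    [FiniteDimensional ℝ E]
    (k : E → E → ℝ) (hsymm : ∀ x y, k x y = k y x)
    (hk : ContDiff ℝ 2 (fun p : E × E => k p.1 p.2))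
    (B2 B12 : ℝ) (hB2 : 0 ≤ B2) (hB12 : 0 ≤ B12)
    (h2 : ∀ x y : E, ‖iteratedFDeriv ℝ 2 (fun u => k u y) x‖ ≤ B2)
    (h12 : ∀ x y : E, ‖fderiv ℝ (fun w => fderiv ℝ (fun u => k u w) x) y‖ ≤ B12) :
    ∀ x y : E, |k x x - 2 * k x y + k y y| ≤ (2 * B12 + 3 * B2) * ‖x - y‖ ^ 2 := by
  intro x y
  have hFd : Differentiable ℝ (fun p : E × E => k p.1 p.2) :=
    hk.differentiable (by norm_num)
  have hDF : Differentiable ℝ (fderiv ℝ (fun p : E × E => k p.1 p.2)) :=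
    (hk.fderiv_right (m := 1) (by norm_num)).differentiable (by norm_num)
  set J : E →L[ℝ] E × E := (ContinuousLinearMap.id ℝ E).prod 0 with hJ
  have key : ∀ (u w : E), HasFDerivAt (fun v => k v w)
      ((fderiv ℝ (fun p : E × E => k p.1 p.2) (u, w)).comp J) u := by
    intro u w
    have h1 : HasFDerivAt (fun p : E × E => k p.1 p.2)
        (fderiv ℝ (fun p : E × E => k p.1 p.2) (u, w)) (u, w) :=
      (hFd (u, w)).hasFDerivAt
    have h2' : HasFDerivAt (fun v : E => (v, w)) J u :=
      HasFDerivAt.prodMk (hasFDerivAt_id u) (hasFDerivAt_const w u)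
    exact h1.comp u h2'
  have hdiff_h : ∀ u : E, Differentiable ℝ (fun w => fderiv ℝ (fun v => k v w) u) := by
    intro u
    have heq : (fun w => fderiv ℝ (fun v => k v w) u)
        = fun w => ((ContinuousLinearMap.compL ℝ E (E × E) ℝ).flip J)
            (fderiv ℝ (fun p : E × E => k p.1 p.2) (u, w)) := by
      funext w
      rw [(key u w).fderiv]
      rfl
    rw [heq]
    exact (((ContinuousLinearMap.compL ℝ E (E × E) ℝ).flip J).differentiable).comp
      (hDF.comp ((differentiable_const u).prodMk differentiable_id))
  have hC : ∀ u : E, ‖fderiv ℝ (fun v => k v x) u - fderiv ℝ (fun v => k v y) u‖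
      ≤ B12 * ‖x - y‖ := by
    intro u
    have := Convex.norm_image_sub_le_of_norm_fderiv_le
      (f := fun w => fderiv ℝ (fun v => k v w) u)
      (fun w _ => hdiff_h u w)
      (fun w _ => h12 u w) convex_univ (Set.mem_univ y) (Set.mem_univ x)
    simpa using this
  have hg : ∀ u, HasFDerivAt (fun v => k v x - k v y)
      (fderiv ℝ (fun v => k v x) u - fderiv ℝ (fun v => k v y) u) u := by
    intro u
    have h := (key u x).sub (key u y)
    rw [(key u x).fderiv, (key u y).fderiv]
    exact h
  have hmain : ‖(k x x - k x y) - (k y x - k y y)‖ ≤ (B12 * ‖x - y‖) * ‖x - y‖ := by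
    have := Convex.norm_image_sub_le_of_norm_fderiv_le
      (f := fun v => k v x - k v y)
      (fun u _ => (hg u).differentiableAt)
      (fun u _ => by rw [(hg u).fderiv]; exact hC u)
      convex_univ (Set.mem_univ y) (Set.mem_univ x)
    simpa using this
  have heq : k x x - 2 * k x y + k y y = (k x x - k x y) - (k y x - k y y) := by
    rw [hsymm y x]; ring
  rw [heq, ← Real.norm_eq_abs]
  calc ‖(k x x - k x y) - (k y x - k y y)‖ ≤ (B12 * ‖x - y‖) * ‖x - y‖ := hmain
    _ ≤ (2 * B12 + 3 * B2) * ‖x - y‖ ^ 2 := by nlinarith [norm_nonneg (x - y)]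
end

section
/- Let E be a finite-dimensional real inner product space equipped with its Borel σ-algebra, μ a probability measure on E, H a real Hilbert space, κ, L, δ ≥ 0, and Φ : E → H strongly measurable with ‖Φ(x)‖ ≤ κ and ‖Φ(x) − Φ(y)‖ ≤ L·‖x − y‖ for all x, y ∈ E. Let u, v : E → E be measurable maps with ‖u(x) − v(x)‖ ≤ δ for all x ∈ E. Then for every φ ∈ H: ‖∫ (⟨φ, Φ(u(x))⟩·Φ(u(x)) − ⟨φ, Φ(v(x))⟩·Φ(v(x))) dμ(x)‖_H ≤ 2·κ·L·δ·‖φ‖. -/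
open MeasureTheory
open scoped InnerProductSpace

lemma ptwise {H : Type*} [NormedAddCommGroup H] [InnerProductSpace ℝ H]
    (φ a b : H) : ‖⟪φ, a⟫_ℝ • a - ⟪φ, b⟫_ℝ • b‖ ≤ ‖φ‖ * (‖a‖ + ‖b‖) * ‖a - b‖ := by
  have h : ⟪φ, a⟫_ℝ • a - ⟪φ, b⟫_ℝ • b = ⟪φ, a⟫_ℝ • (a - b) + ⟪φ, a - b⟫_ℝ • b := by
    rw [inner_sub_right]; module
  rw [h]
  calc ‖⟪φ, a⟫_ℝ • (a - b) + ⟪φ, a - b⟫_ℝ • b‖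
      ≤ ‖⟪φ, a⟫_ℝ • (a - b)‖ + ‖⟪φ, a - b⟫_ℝ • b‖ := norm_add_le _ _
    _ ≤ ‖φ‖ * ‖a‖ * ‖a - b‖ + ‖φ‖ * ‖a - b‖ * ‖b‖ := by
        gcongr <;> rw [norm_smul] <;>
          exact mul_le_mul_of_nonneg_right (abs_real_inner_le_norm _ _) (norm_nonneg _)
    _ = ‖φ‖ * (‖a‖ + ‖b‖) * ‖a - b‖ := by ring

/-- Operator perturbation bound of Lemma 4 / Proposition 6 via the feature map:
for a bounded `L`-Lipschitz feature map `Φ` and measurable maps `u, v` with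
`‖u(x) − v(x)‖ ≤ δ`, for every `φ`,
`‖∫ (⟨φ, Φ(u(x))⟩ Φ(u(x)) − ⟨φ, Φ(v(x))⟩ Φ(v(x))) dμ‖ ≤ 2κLδ‖φ‖`. -/
theorem stmt15 {E H : Type*}
    [NormedAddCommGroup E] [InnerProductSpace ℝ E] [FiniteDimensional ℝ E]
    [MeasurableSpace E] [BorelSpace E]
    [NormedAddCommGroup H] [InnerProductSpace ℝ H] [CompleteSpace H]
    (μ : Measure E) [IsProbabilityMeasure μ]
    (κ L δ : ℝ) (hκ : 0 ≤ κ) (hL : 0 ≤ L) (hδ : 0 ≤ δ)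
    (Φ : E → H) (hΦm : StronglyMeasurable Φ)
    (hΦb : ∀ x, ‖Φ x‖ ≤ κ)
    (hΦlip : ∀ x y : E, ‖Φ x - Φ y‖ ≤ L * ‖x - y‖)
    (u v : E → E) (hu : Measurable u) (hv : Measurable v)
    (huv : ∀ x, ‖u x - v x‖ ≤ δ) :
    ∀ φ : H,
      ‖∫ x, (⟪φ, Φ (u x)⟫_ℝ • Φ (u x) - ⟪φ, Φ (v x)⟫_ℝ • Φ (v x)) ∂μ‖
        ≤ 2 * κ * L * δ * ‖φ‖ := by
  intro φ
  have hb : ∀ x, ‖⟪φ, Φ (u x)⟫_ℝ • Φ (u x) - ⟪φ, Φ (v x)⟫_ℝ • Φ (v x)‖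
      ≤ 2 * κ * L * δ * ‖φ‖ := by
    intro x
    calc ‖⟪φ, Φ (u x)⟫_ℝ • Φ (u x) - ⟪φ, Φ (v x)⟫_ℝ • Φ (v x)‖
        ≤ ‖φ‖ * (‖Φ (u x)‖ + ‖Φ (v x)‖) * ‖Φ (u x) - Φ (v x)‖ := ptwise _ _ _
      _ ≤ ‖φ‖ * (κ + κ) * (L * δ) := by
          gcongr
          · exact hΦb _
          · exact hΦb _
          · exact (hΦlip _ _).trans (by
              have := huv x; nlinarith [norm_nonneg (u x - v x)])
      _ = 2 * κ * L * δ * ‖φ‖ := by ring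
  calc ‖∫ x, (⟪φ, Φ (u x)⟫_ℝ • Φ (u x) - ⟪φ, Φ (v x)⟫_ℝ • Φ (v x)) ∂μ‖
      ≤ 2 * κ * L * δ * ‖φ‖ * (μ Set.univ).toReal :=
        norm_integral_le_of_norm_le_const (Filter.Eventually.of_forall hb)
    _ = 2 * κ * L * δ * ‖φ‖ := by simp
end
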